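/- arXiv:2212.09905 — 2 statements merged into one kernel-verified Lean document; each statement's English description precedes it below -/
import Mathlib

section
/- Fix p ∈ [0,1]. Consider the CS6V model with constant parameters b₁(i,j) ≡ 0 and b₂(i,j) ≡ 1−p, with height function H, and the discrete Hammersley process with parameter p, with height function H^d. Then the random families (H(x,y))_{(x,y) ∈ ℤ≥0²} and (H^d(x,y))_{(x,y) ∈ ℤ≥0²} have the same joint distribution. -/
/-!
If `b₁ < U` at every vertex (almost surely the case for `b₁ ≡ 0`), two incoming paths always
annihilate, a vertex without input emits a pair exactly when `b₂ < U`, and paths are conserved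
otherwise. Writing `H(x+1, y) - H(x, y)` and `H(x, y+1) - H(x, y)` as the inputs of vertex
`(x, y)`, the local rule becomes the last-passage recursion
`H(x+1, y+1) = max (H(x, y+1), H(x+1, y), H(x, y) + ξ(x+1, y+1))`
with `ξ(a+1, b+1) = [b₂ < U(a, b)]`, which is also the recursion of the longest increasing chain
of the point field `ξ`. Hence the CS6V height is a measurable functional of the Bernoulli field
`[1 - p < U]`, the Hammersley height is the same functional of `[V ≤ p]`, and both fields are
i.i.d. Bernoulli(`p`).
-/

open MeasureTheory Filter

/-- Generic sequential sampling of a vertex model on the first quadrant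
(vertices indexed from `0`, corresponding to the paper's coordinates `(a+1, b+1)`). -/
def outCfg (bd : Bool) (rule : ℕ → ℕ → Bool → Bool → Bool × Bool) : ℕ → ℕ → Bool × Bool
  | 0, 0 => rule 0 0 false bd
  | a + 1, 0 => rule (a + 1) 0 false (outCfg bd rule a 0).2
  | 0, b + 1 => rule 0 (b + 1) (outCfg bd rule 0 b).1 bd
  | a + 1, b + 1 => rule (a + 1) (b + 1) (outCfg bd rule (a + 1) b).1 (outCfg bd rule a (b + 1)).2
termination_by a b => a + b

/-- The sampling rule of the complemented stochastic six vertex (CS6V) model. -/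
noncomputable def cs6vRule (b1 b2 u : ℕ → ℕ → ℝ) (a b : ℕ) (ib il : Bool) : Bool × Bool :=
  match ib, il with
  | true, false => (true, false)
  | false, true => (false, true)
  | true, true => if u a b ≤ b1 a b then (true, true) else (false, false)
  | false, false => if u a b ≤ b2 a b then (false, false) else (true, true)

/-- The top output `O_t` and right output `O_r` of the vertex `(a+1, b+1)` of the CS6V model
with empty boundary data. -/
noncomputable def cs6vOut (b1 b2 u : ℕ → ℕ → ℝ) (a b : ℕ) : Bool × Bool :=
  outCfg false (cs6vRule b1 b2 u) a b

/-- The height function of the CS6V model with empty boundary data. -/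
noncomputable def cs6vHeight (b1 b2 u : ℕ → ℕ → ℝ) (x y : ℕ) : ℕ :=
  if y = 0 then 0
  else ((Finset.range x).filter (fun a => (cs6vOut b1 b2 u a (y - 1)).1 = true)).card

/-- The height function of the discrete Hammersley process with point configuration
`ξ` (where `ξ a b` indicates the presence of a point at `(a, b) ∈ ℤ≥1²`):
the maximal length of a strictly increasing chain of points of `ξ` inside `[1,x] × [1,y]`. -/
noncomputable def hamHeight (ξ : ℕ → ℕ → Bool) (x y : ℕ) : ℕ :=
  sSup {L : ℕ | ∃ c : Fin L → ℕ × ℕ,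
    (∀ t, ξ (c t).1 (c t).2 = true ∧
      1 ≤ (c t).1 ∧ (c t).1 ≤ x ∧ 1 ≤ (c t).2 ∧ (c t).2 ≤ y) ∧
    ∀ s t, s < t → (c s).1 < (c t).1 ∧ (c s).2 < (c t).2}

open ProbabilityTheory

lemma Nat.quadrant_induction {P : ℕ → ℕ → Prop} (zero_left : ∀ y, P 0 y)
    (zero_right : ∀ x, P x 0)
    (succ_succ : ∀ x y, P x (y + 1) → P (x + 1) y → P x y → P (x + 1) (y + 1)) :
    ∀ x y, P x y := by
  intro x
  induction x with
  | zero => exact zero_left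
  | succ x ihx =>
    intro y
    induction y with
    | zero => exact zero_right _
    | succ y ihy => exact succ_succ x y (ihx _) ihy (ihx _)

section CS6V

variable (b1 b2 u : ℕ → ℕ → ℝ)

-- The inputs `I_b` and `I_l` of the vertex `(a+1, b+1)`.
noncomputable def cs6vInBottom : ℕ → ℕ → Bool
  | _, 0 => false
  | a, b + 1 => (cs6vOut b1 b2 u a b).1

noncomputable def cs6vInLeft : ℕ → ℕ → Bool
  | 0, _ => false
  | a + 1, b => (cs6vOut b1 b2 u a b).2

variable {b1 b2 u}

lemma cs6vOut_eq_cs6vRule (a b : ℕ) :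
    cs6vOut b1 b2 u a b =
      cs6vRule b1 b2 u a b (cs6vInBottom b1 b2 u a b) (cs6vInLeft b1 b2 u a b) := by
  rcases a with _ | a <;> rcases b with _ | b <;>
    simp [cs6vOut, outCfg, cs6vInBottom, cs6vInLeft]

lemma cs6vRule_conservation {a b : ℕ} (h : b1 a b < u a b) (ib il : Bool) :
    (cs6vRule b1 b2 u a b ib il).1.toNat + il.toNat =
      (cs6vRule b1 b2 u a b ib il).2.toNat + ib.toNat := by
  cases ib <;> cases il <;> simp only [cs6vRule, if_neg (not_le.mpr h)] <;> (try split_ifs) <;> rfl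

lemma cs6vRule_toNat_add_snd {a b : ℕ} (h : b1 a b < u a b) (ib il : Bool) :
    ib.toNat + (cs6vRule b1 b2 u a b ib il).2.toNat =
      max (max il.toNat ib.toNat) (decide (b2 a b < u a b)).toNat := by
  cases ib <;> cases il <;> simp only [cs6vRule, if_neg (not_le.mpr h)] <;> (try split_ifs) <;>
    simp_all [Bool.toNat_le]

lemma cs6vHeight_zero_left (y : ℕ) : cs6vHeight b1 b2 u 0 y = 0 := by
  simp [cs6vHeight]

lemma cs6vHeight_zero_right (x : ℕ) : cs6vHeight b1 b2 u x 0 = 0 := by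
  simp [cs6vHeight]

lemma cs6vHeight_succ_left (x y : ℕ) :
    cs6vHeight b1 b2 u (x + 1) y = cs6vHeight b1 b2 u x y + (cs6vInBottom b1 b2 u x y).toNat := by
  rcases y with _ | y
  · simp [cs6vHeight, cs6vInBottom]
  · simp only [cs6vHeight, Nat.add_one_ne_zero, if_false, Nat.add_sub_cancel, cs6vInBottom,
      Finset.range_add_one, Finset.filter_insert]
    split_ifs with h <;> simp [h]

lemma cs6vHeight_succ_right (hu : ∀ a b, b1 a b < u a b) (x y : ℕ) :
    cs6vHeight b1 b2 u x (y + 1) = cs6vHeight b1 b2 u x y + (cs6vInLeft b1 b2 u x y).toNat := by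
  induction x with
  | zero => simp [cs6vHeight_zero_left, cs6vInLeft]
  | succ x ih =>
    have hcons := cs6vRule_conservation (b2 := b2) (hu x y)
      (cs6vInBottom b1 b2 u x y) (cs6vInLeft b1 b2 u x y)
    rw [← cs6vOut_eq_cs6vRule] at hcons
    rw [cs6vHeight_succ_left, cs6vHeight_succ_left, ih]
    simp only [cs6vInBottom, cs6vInLeft] at hcons ⊢
    omega

lemma cs6vHeight_succ_succ (hu : ∀ a b, b1 a b < u a b) (x y : ℕ) :
    cs6vHeight b1 b2 u (x + 1) (y + 1) =
      max (max (cs6vHeight b1 b2 u x (y + 1)) (cs6vHeight b1 b2 u (x + 1) y))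
        (cs6vHeight b1 b2 u x y + (decide (b2 x y < u x y)).toNat) := by
  have hmax := cs6vRule_toNat_add_snd (b2 := b2) (hu x y)
    (cs6vInBottom b1 b2 u x y) (cs6vInLeft b1 b2 u x y)
  rw [← cs6vOut_eq_cs6vRule] at hmax
  rw [cs6vHeight_succ_right hu, cs6vHeight_succ_left, cs6vHeight_succ_right hu]
  simp only [cs6vInLeft] at hmax ⊢
  omega

end CS6V

section Hammersley

variable (ξ : ℕ → ℕ → Bool)

def IsHamChain (x y : ℕ) {L : ℕ} (c : Fin L → ℕ × ℕ) : Prop :=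
  (∀ t, ξ (c t).1 (c t).2 = true ∧
    1 ≤ (c t).1 ∧ (c t).1 ≤ x ∧ 1 ≤ (c t).2 ∧ (c t).2 ≤ y) ∧
  ∀ s t, s < t → (c s).1 < (c t).1 ∧ (c s).2 < (c t).2

-- `hamHeight ξ x y` is `sSup (hamChainLengths ξ x y)` by definition.
def hamChainLengths (x y : ℕ) : Set ℕ :=
  {L | ∃ c : Fin L → ℕ × ℕ, IsHamChain ξ x y c}

variable {ξ}

lemma zero_mem_hamChainLengths (x y : ℕ) : 0 ∈ hamChainLengths ξ x y :=
  ⟨Fin.elim0, fun t => t.elim0, fun s => s.elim0⟩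

lemma le_of_mem_hamChainLengths {x y L : ℕ} (hL : L ∈ hamChainLengths ξ x y) : L ≤ x := by
  obtain ⟨c, hc, hinc⟩ := hL
  have hmono : StrictMono fun t => (c t).1 := fun s t hst => (hinc s t hst).1
  simpa using Finset.card_le_card_of_injOn (fun t => (c t).1) (s := Finset.univ)
    (t := Finset.Icc 1 x) (fun t _ => by simp [(hc t).2.1, (hc t).2.2.1])
    hmono.injective.injOn

lemma bddAbove_hamChainLengths (x y : ℕ) : BddAbove (hamChainLengths ξ x y) :=
  ⟨x, fun _ => le_of_mem_hamChainLengths⟩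

lemma hamHeight_mem_hamChainLengths (x y : ℕ) : hamHeight ξ x y ∈ hamChainLengths ξ x y :=
  Nat.sSup_mem ⟨0, zero_mem_hamChainLengths x y⟩ (bddAbove_hamChainLengths x y)

lemma le_hamHeight {x y L : ℕ} (hL : L ∈ hamChainLengths ξ x y) : L ≤ hamHeight ξ x y :=
  le_csSup (bddAbove_hamChainLengths x y) hL

lemma hamHeight_le {x y n : ℕ} (h : ∀ L ∈ hamChainLengths ξ x y, L ≤ n) :
    hamHeight ξ x y ≤ n :=
  csSup_le ⟨0, zero_mem_hamChainLengths x y⟩ h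

lemma IsHamChain.mono {x y x' y' L : ℕ} {c : Fin L → ℕ × ℕ} (hc : IsHamChain ξ x y c)
    (hbound : ∀ t, (c t).1 ≤ x' ∧ (c t).2 ≤ y') : IsHamChain ξ x' y' c :=
  ⟨fun t => ⟨(hc.1 t).1, (hc.1 t).2.1, (hbound t).1, (hc.1 t).2.2.2.1, (hbound t).2⟩, hc.2⟩

lemma hamHeight_mono {x y x' y' : ℕ} (hx : x ≤ x') (hy : y ≤ y') :
    hamHeight ξ x y ≤ hamHeight ξ x' y' :=
  hamHeight_le fun _ ⟨c, hc⟩ => le_hamHeight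
    ⟨c, hc.mono fun t => ⟨(hc.1 t).2.2.1.trans hx, (hc.1 t).2.2.2.2.trans hy⟩⟩

lemma hamHeight_zero_left (y : ℕ) : hamHeight ξ 0 y = 0 :=
  Nat.le_zero.mp (hamHeight_le fun _ => le_of_mem_hamChainLengths)

lemma hamHeight_zero_right (x : ℕ) : hamHeight ξ x 0 = 0 := by
  refine Nat.le_zero.mp (hamHeight_le ?_)
  rintro (_ | L) ⟨c, hc, -⟩
  · rfl
  · have := hc 0
    omega

/-- A chain in `[1, x+1] × [1, y+1]` either avoids the last column, or avoids the last row,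
or ends at the corner `(x+1, y+1)`. -/
lemma hamHeight_succ_succ_le (x y : ℕ) :
    hamHeight ξ (x + 1) (y + 1) ≤
      max (max (hamHeight ξ x (y + 1)) (hamHeight ξ (x + 1) y))
        (hamHeight ξ x y + (ξ (x + 1) (y + 1)).toNat) := by
  refine hamHeight_le ?_
  rintro (_ | m) ⟨c, hc⟩
  · exact Nat.zero_le _
  have hlast : ∀ t, (c t).1 ≤ (c (Fin.last m)).1 ∧ (c t).2 ≤ (c (Fin.last m)).2 := by
    intro t
    rcases (Fin.le_last t).eq_or_lt with h | h
    · rw [h]; exact ⟨le_rfl, le_rfl⟩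
    · exact ⟨(hc.2 t _ h).1.le, (hc.2 t _ h).2.le⟩
  obtain ⟨hξ, -, hx, -, hy⟩ := hc.1 (Fin.last m)
  by_cases h1 : (c (Fin.last m)).1 ≤ x
  · have := le_hamHeight ⟨c, hc.mono fun t => ⟨(hlast t).1.trans h1, (hc.1 t).2.2.2.2⟩⟩
    omega
  by_cases h2 : (c (Fin.last m)).2 ≤ y
  · have := le_hamHeight ⟨c, hc.mono fun t => ⟨(hc.1 t).2.2.1, (hlast t).2.trans h2⟩⟩
    omega
  have hcorner : c (Fin.last m) = (x + 1, y + 1) := Prod.ext (by omega) (by omega)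
  have hinit : IsHamChain ξ x y (Fin.init c) := by
    refine ⟨fun t => ?_, fun s t hst => hc.2 _ _ (Fin.castSucc_lt_castSucc_iff.mpr hst)⟩
    have hlt := hc.2 t.castSucc (Fin.last m) (Fin.castSucc_lt_last t)
    rw [hcorner] at hlt
    obtain ⟨hξt, h1t, -, h2t, -⟩ := hc.1 t.castSucc
    exact ⟨hξt, h1t, Nat.lt_succ_iff.mp hlt.1, h2t, Nat.lt_succ_iff.mp hlt.2⟩
  have := le_hamHeight ⟨_, hinit⟩
  rw [hcorner] at hξ
  simp only [hξ, Bool.toNat_true]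
  omega

lemma hamHeight_add_one_le_of_corner {x y : ℕ} (hξ : ξ (x + 1) (y + 1) = true) :
    hamHeight ξ x y + 1 ≤ hamHeight ξ (x + 1) (y + 1) := by
  obtain ⟨c, hc⟩ := hamHeight_mem_hamChainLengths (ξ := ξ) x y
  refine le_hamHeight ⟨Fin.snoc c (x + 1, y + 1), fun t => ?_, fun s t hst => ?_⟩
  · refine Fin.lastCases ?_ (fun t => ?_) t
    · simp [hξ]
    · obtain ⟨hξt, h1, hx, h2, hy⟩ := hc.1 t
      simp only [Fin.snoc_castSucc]
      exact ⟨hξt, h1, hx.trans x.le_succ, h2, hy.trans y.le_succ⟩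
  · induction t using Fin.lastCases with
    | last =>
      obtain ⟨s, rfl⟩ := Fin.exists_castSucc_eq.mpr (Fin.ne_last_of_lt hst)
      obtain ⟨-, -, hx, -, hy⟩ := hc.1 s
      simp only [Fin.snoc_castSucc, Fin.snoc_last]
      omega
    | cast t =>
      obtain ⟨s, rfl⟩ :=
        Fin.exists_castSucc_eq.mpr (Fin.ne_last_of_lt (hst.trans t.castSucc_lt_last))
      simp only [Fin.snoc_castSucc]
      exact hc.2 s t (Fin.castSucc_lt_castSucc_iff.mp hst)

lemma hamHeight_succ_succ (x y : ℕ) :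
    hamHeight ξ (x + 1) (y + 1) =
      max (max (hamHeight ξ x (y + 1)) (hamHeight ξ (x + 1) y))
        (hamHeight ξ x y + (ξ (x + 1) (y + 1)).toNat) := by
  refine (hamHeight_succ_succ_le x y).antisymm (max_le (max_le ?_ ?_) ?_)
  · exact hamHeight_mono x.le_succ le_rfl
  · exact hamHeight_mono le_rfl y.le_succ
  · cases hξ : ξ (x + 1) (y + 1)
    · exact hamHeight_mono x.le_succ y.le_succ
    · exact hamHeight_add_one_le_of_corner hξ

lemma eq_hamHeight_of_succ_succ {G : ℕ → ℕ → ℕ} (zero_left : ∀ y, G 0 y = 0)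
    (zero_right : ∀ x, G x 0 = 0)
    (succ_succ : ∀ x y, G (x + 1) (y + 1) =
      max (max (G x (y + 1)) (G (x + 1) y)) (G x y + (ξ (x + 1) (y + 1)).toNat)) :
    G = hamHeight ξ := by
  funext x y
  refine Nat.quadrant_induction (P := fun x y => G x y = hamHeight ξ x y) (fun y => ?_)
    (fun x => ?_) (fun x y h₁ h₂ h₃ => ?_) x y
  · rw [zero_left, hamHeight_zero_left]
  · rw [zero_right, hamHeight_zero_right]
  · rw [succ_succ, hamHeight_succ_succ, h₁, h₂, h₃]

lemma hamHeight_congr {ξ' : ℕ → ℕ → Bool}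
    (h : ∀ a b, ξ (a + 1) (b + 1) = ξ' (a + 1) (b + 1)) :
    hamHeight ξ = hamHeight ξ' :=
  eq_hamHeight_of_succ_succ hamHeight_zero_left hamHeight_zero_right fun x y => by
    rw [hamHeight_succ_succ, h]

lemma measurable_hamHeight (x y : ℕ) :
    Measurable fun ξ : ℕ → ℕ → Bool => hamHeight ξ x y := by
  refine Nat.quadrant_induction (P := fun x y => Measurable fun ξ => hamHeight ξ x y)
    (fun y => ?_) (fun x => ?_) (fun x y h₁ h₂ h₃ => ?_) x y
  · simp only [hamHeight_zero_left, measurable_const]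
  · simp only [hamHeight_zero_right, measurable_const]
  · simp only [hamHeight_succ_succ]
    fun_prop

end Hammersley

theorem cs6vHeight_eq_hamHeight {b1 b2 u : ℕ → ℕ → ℝ} (hu : ∀ a b, b1 a b < u a b) :
    cs6vHeight b1 b2 u = hamHeight fun a b => decide (b2 (a - 1) (b - 1) < u (a - 1) (b - 1)) :=
  eq_hamHeight_of_succ_succ cs6vHeight_zero_left cs6vHeight_zero_right
    (cs6vHeight_succ_succ hu)

/-- The Hammersley height function of a point field indexed from `0`, as in `cs6vOut`. -/
noncomputable def hamHeightField (B : ℕ × ℕ → Bool) (q : ℕ × ℕ) : ℕ :=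
  hamHeight (fun a b => B (a - 1, b - 1)) q.1 q.2

lemma measurable_hamHeightField : Measurable hamHeightField :=
  measurable_pi_lambda _ fun q => (measurable_hamHeight q.1 q.2).comp
    (f := fun (B : ℕ × ℕ → Bool) a b => B (a - 1, b - 1)) <|
      measurable_pi_lambda _ fun _ => measurable_pi_lambda _ fun _ => measurable_pi_apply _

section Law

variable {Ω Ω' : Type*} [MeasurableSpace Ω] [MeasurableSpace Ω'] {μ : Measure Ω}
  {μ' : Measure Ω'}

lemma measurable_decide_lt {α : Type*} [LinearOrder α] [TopologicalSpace α]
    [OrderClosedTopology α] [MeasurableSpace α] [OpensMeasurableSpace α] (c : α) :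
    Measurable fun r : α => decide (c < r) := by
  refine measurable_to_bool ?_
  convert measurableSet_Ioi (a := c)
  ext; simp

lemma measurable_decide_le {α : Type*} [LinearOrder α] [TopologicalSpace α]
    [OrderClosedTopology α] [MeasurableSpace α] [OpensMeasurableSpace α] (c : α) :
    Measurable fun r : α => decide (r ≤ c) := by
  refine measurable_to_bool ?_
  convert measurableSet_Iic (a := c)
  ext; simp

lemma MeasureTheory.Measure.ext_bool_of_apply_true {ν ν' : Measure Bool}
    [IsProbabilityMeasure ν] [IsProbabilityMeasure ν'] (h : ν {true} = ν' {true}) :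
    ν = ν' := by
  refine Measure.ext_of_singleton fun b => ?_
  cases b
  · have hfalse : ({false} : Set Bool) = {true}ᶜ := by ext b; simp
    rw [hfalse, prob_compl_eq_one_sub (measurableSet_singleton _),
      prob_compl_eq_one_sub (measurableSet_singleton _), h]
  · exact h

lemma map_fun_eq_of_iIndepFun {ι β : Type*} [MeasurableSpace β] [IsProbabilityMeasure μ]
    [IsProbabilityMeasure μ'] {X : ι → Ω → β} {Y : ι → Ω' → β}
    (mX : ∀ i, Measurable (X i))
    (mY : ∀ i, Measurable (Y i)) (hX : iIndepFun X μ) (hY : iIndepFun Y μ')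
    (h : ∀ i, μ.map (X i) = μ'.map (Y i)) :
    μ.map (fun ω i => X i ω) = μ'.map (fun ω i => Y i ω) := by
  rw [hX.map_fun_eq_infinitePi_map mX, hY.map_fun_eq_infinitePi_map mY, funext h]

section Uniform

variable {U : Ω → ℝ}

lemma measure_preimage_Iic_of_uniform (hU : Measurable U)
    (hunif : μ.map U = volume.restrict (Set.Icc 0 1)) {c : ℝ} (hc1 : c ≤ 1) :
    μ (U ⁻¹' Set.Iic c) = ENNReal.ofReal c := by
  have hinter : Set.Iic c ∩ Set.Icc 0 1 = Set.Icc 0 c := by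
    ext r; simp only [Set.mem_inter_iff, Set.mem_Iic, Set.mem_Icc]; grind
  rw [← Measure.map_apply hU measurableSet_Iic, hunif, Measure.restrict_apply measurableSet_Iic,
    hinter, Real.volume_Icc, sub_zero]

lemma measure_preimage_Ioi_of_uniform (hU : Measurable U)
    (hunif : μ.map U = volume.restrict (Set.Icc 0 1)) {c : ℝ} (hc0 : 0 ≤ c) :
    μ (U ⁻¹' Set.Ioi c) = ENNReal.ofReal (1 - c) := by
  have hinter : Set.Ioi c ∩ Set.Icc 0 1 = Set.Ioc c 1 := by
    ext r; simp only [Set.mem_inter_iff, Set.mem_Ioi, Set.mem_Icc, Set.mem_Ioc]; grind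
  rw [← Measure.map_apply hU measurableSet_Ioi, hunif, Measure.restrict_apply measurableSet_Ioi,
    hinter, Real.volume_Ioc]

lemma ae_pos_of_uniform (hU : Measurable U)
    (hunif : μ.map U = volume.restrict (Set.Icc 0 1)) : ∀ᵐ ω ∂μ, 0 < U ω := by
  have hnonpos : {ω | ¬0 < U ω} = U ⁻¹' Set.Iic 0 := by ext; simp
  rw [ae_iff, hnonpos, measure_preimage_Iic_of_uniform hU hunif zero_le_one,
    ENNReal.ofReal_zero]

end Uniform

lemma map_decide_lt_eq_map_decide_le_of_uniform [IsProbabilityMeasure μ]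
    [IsProbabilityMeasure μ'] {U : Ω → ℝ} {V : Ω' → ℝ} (hU : Measurable U)
    (hUunif : μ.map U = volume.restrict (Set.Icc 0 1)) (hV : Measurable V)
    (hVunif : μ'.map V = volume.restrict (Set.Icc 0 1)) {p : ℝ} (hp1 : p ≤ 1) :
    μ.map (fun ω => decide (1 - p < U ω)) = μ'.map (fun ω' => decide (V ω' ≤ p)) := by
  have mU : Measurable fun ω => decide (1 - p < U ω) := (measurable_decide_lt _).comp hU
  have mV : Measurable fun ω' => decide (V ω' ≤ p) := (measurable_decide_le _).comp hV
  have := Measure.isProbabilityMeasure_map (μ := μ) mU.aemeasurable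
  have := Measure.isProbabilityMeasure_map (μ := μ') mV.aemeasurable
  refine Measure.ext_bool_of_apply_true ?_
  have hUset : (fun ω => decide (1 - p < U ω)) ⁻¹' {true} = U ⁻¹' Set.Ioi (1 - p) := by
    ext; simp
  have hVset : (fun ω' => decide (V ω' ≤ p)) ⁻¹' {true} = V ⁻¹' Set.Iic p := by ext; simp
  rw [Measure.map_apply mU (measurableSet_singleton _),
    Measure.map_apply mV (measurableSet_singleton _), hUset, hVset,
    measure_preimage_Ioi_of_uniform hU hUunif (sub_nonneg.mpr hp1),
    measure_preimage_Iic_of_uniform hV hVunif hp1, sub_sub_cancel]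

lemma map_decide_field_eq_of_iid_uniform {ι : Type*} [IsProbabilityMeasure μ]
    [IsProbabilityMeasure μ'] {U : ι → Ω → ℝ} {V : ι → Ω' → ℝ}
    (hU : ∀ i, Measurable (U i))
    (hUindep : iIndepFun U μ) (hUunif : ∀ i, μ.map (U i) = volume.restrict (Set.Icc 0 1))
    (hV : ∀ i, Measurable (V i)) (hVindep : iIndepFun V μ')
    (hVunif : ∀ i, μ'.map (V i) = volume.restrict (Set.Icc 0 1)) {p : ℝ} (hp1 : p ≤ 1) :
    μ.map (fun ω i => decide (1 - p < U i ω)) = μ'.map (fun ω' i => decide (V i ω' ≤ p)) :=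
  map_fun_eq_of_iIndepFun (fun i => (measurable_decide_lt _).comp (hU i))
    (fun i => (measurable_decide_le _).comp (hV i))
    (hUindep.comp _ fun _ => measurable_decide_lt _)
    (hVindep.comp _ fun _ => measurable_decide_le _)
    fun i => map_decide_lt_eq_map_decide_le_of_uniform (hU i) (hUunif i) (hV i) (hVunif i) hp1

end Law

/-- The CS6V model with parameters `b₁ ≡ 0`, `b₂ ≡ 1 - p` degenerates to the discrete
Hammersley process with parameter `p`: the height functions agree as processes in law. -/
theorem cs6v_eq_hammersley_in_law
    (p : ℝ) (hp : p ∈ Set.Icc (0 : ℝ) 1)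
    {Ω : Type*} [MeasurableSpace Ω] (μ : Measure Ω) [IsProbabilityMeasure μ]
    (U : ℕ × ℕ → Ω → ℝ)
    (hUmeas : ∀ q, Measurable (U q))
    (hUindep : ProbabilityTheory.iIndepFun U μ)
    (hUunif : ∀ q, Measure.map (U q) μ = volume.restrict (Set.Icc (0 : ℝ) 1))
    {Ω' : Type*} [MeasurableSpace Ω'] (μ' : Measure Ω') [IsProbabilityMeasure μ']
    (V : ℕ × ℕ → Ω' → ℝ)
    (hVmeas : ∀ q, Measurable (V q))
    (hVindep : ProbabilityTheory.iIndepFun V μ')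
    (hVunif : ∀ q, Measure.map (V q) μ' = volume.restrict (Set.Icc (0 : ℝ) 1)) :
    Measure.map (fun ω => fun q : ℕ × ℕ =>
        cs6vHeight (fun _ _ => 0) (fun _ _ => 1 - p) (fun a b => U (a, b) ω) q.1 q.2) μ
      = Measure.map (fun ω' => fun q : ℕ × ℕ =>
        hamHeight (fun a b => decide (V (a, b) ω' ≤ p)) q.1 q.2) μ' := by
  let shift : ℕ × ℕ → ℕ × ℕ := fun q => (q.1 + 1, q.2 + 1)
  have hcs6v : (fun ω q => cs6vHeight (fun _ _ => 0) (fun _ _ => 1 - p)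
      (fun a b => U (a, b) ω) q.1 q.2) =ᵐ[μ]
        hamHeightField ∘ fun ω q => decide (1 - p < U q ω) := by
    filter_upwards [ae_all_iff.2 fun q => ae_pos_of_uniform (hUmeas q) (hUunif q)] with ω hω
    rw [cs6vHeight_eq_hamHeight fun a b => hω (a, b)]
    rfl
  have hham : (fun ω' q => hamHeight (fun a b => decide (V (a, b) ω' ≤ p)) q.1 q.2) =
      hamHeightField ∘ fun ω' q => decide (V (shift q) ω' ≤ p) := by
    funext ω' q
    simp only [Function.comp_apply, hamHeightField]
    refine congrFun₂ (hamHeight_congr fun a b => ?_) q.1 q.2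
    simp [shift]
  rw [Measure.map_congr hcs6v, hham,
    ← Measure.map_map measurable_hamHeightField
      (measurable_pi_lambda (fun ω q => decide (1 - p < U q ω)) fun q =>
        (measurable_decide_lt _).comp (hUmeas q)),
    ← Measure.map_map measurable_hamHeightField
      (measurable_pi_lambda (fun ω' q => decide (V (shift q) ω' ≤ p)) fun q =>
        (measurable_decide_le _).comp (hVmeas _)),
    map_decide_field_eq_of_iid_uniform hUmeas hUindep hUunif (fun q => hVmeas (shift q))
      (hVindep.precomp fun q q' h => by grind) (fun q => hVunif (shift q)) hp.2]
end

section
/- Fix t ∈ (0,1) with t ≠ 1/2, and consider the four-element set S := {0, t, 1−t, 1} ⊂ ℝ. Define a⋆b := 0 if {a,b} = {t, 1−t}; a⋆b := a if a = b; and a⋆b := a·b otherwise. For x₁, …, x_n ∈ S define 𝔪𝔦𝔫(x₁,…,x_n) := 0 if both t and 1−t appear among x₁,…,x_n, and 𝔪𝔦𝔫(x₁,…,x_n) := min(x₁,…,x_n) otherwise. Then ⋆ is commutative and associative on S, and for every n ≥ 1 and x₁,…,x_n ∈ S one has 𝔪𝔦𝔫(x₁,…,x_n) = x₁ ⋆ x₂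 ⋆ ⋯ ⋆ x_n. -/
/-! On `S`, both `⋆` and `𝔪𝔦𝔫` are the meet of the Boolean lattice `0 < t, 1 - t < 1` (with `t`
and `1 - t` incomparable). Since `𝔪𝔦𝔫` depends only on the set of its arguments, it suffices to
check the recursion `𝔪𝔦𝔫(a, x₂, …, xₙ) = a ⋆ 𝔪𝔦𝔫(x₂, …, xₙ)`, a finite case analysis on `a`, on
the minimum of the `xᵢ`, and on whether `t` and `1 - t` occur among them. Associativity then
follows from commutativity and `a ⋆ (b ⋆ c) = 𝔪𝔦𝔫(a, b, c) = 𝔪𝔦𝔫(c, a, b) = c ⋆ (a ⋆ b)`. -/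

/-- The Boolean-type product on `S = {0, t, 1-t, 1}`:
`a ⋆ b = 0` if `{a, b} = {t, 1-t}`, `a ⋆ b = a` if `a = b`, and `a ⋆ b = a·b` otherwise. -/
noncomputable def tpngStar (t : ℝ) (a b : ℝ) : ℝ :=
  if (a = t ∧ b = 1 - t) ∨ (a = 1 - t ∧ b = t) then 0
  else if a = b then a
  else a * b

/-- The iterated product `x₁ ⋆ x₂ ⋆ ⋯ ⋆ x_n`. -/
noncomputable def tpngStarProd (t : ℝ) : List ℝ → ℝ
  | [] => 1
  | [a] => a
  | a :: b :: rest => tpngStar t a (tpngStarProd t (b :: rest))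

/-- The modified minimum `𝔪𝔦𝔫(x₁, …, x_n)`: it is `0` if both `t` and `1 - t` appear
among the `xᵢ`, and the usual minimum otherwise. -/
noncomputable def tpngMin (t : ℝ) {n : ℕ} (x : Fin (n + 1) → ℝ) : ℝ :=
  if (∃ i, x i = t) ∧ (∃ i, x i = 1 - t) then 0
  else Finset.univ.inf' Finset.univ_nonempty x

open Set

def tpngSet (t : ℝ) : Set ℝ := {0, t, 1 - t, 1}

open Classical in
noncomputable def tpngSetMin (t : ℝ) (s : Set ℝ) : ℝ :=
  if t ∈ s ∧ 1 - t ∈ s then 0 else sInf s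

theorem tpngStar_comm (t a b : ℝ) : tpngStar t a b = tpngStar t b a := by
  unfold tpngStar
  split_ifs <;> first | rfl | tauto | exact mul_comm a b

theorem tpngMin_eq_tpngSetMin_range (t : ℝ) {n : ℕ} (x : Fin (n + 1) → ℝ) :
    tpngMin t x = tpngSetMin t (range x) := by
  simp [tpngMin, tpngSetMin, Finset.inf'_eq_csInf_image]

theorem tpngSetMin_singleton {t : ℝ} (hthalf : t ≠ 1 / 2) (a : ℝ) : tpngSetMin t {a} = a := by
  have : ¬(t ∈ ({a} : Set ℝ) ∧ 1 - t ∈ ({a} : Set ℝ)) := by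
    rintro ⟨rfl, h⟩
    exact hthalf (by linarith [mem_singleton_iff.mp h])
  rw [tpngSetMin, if_neg this, csInf_singleton]

open Classical in
/-- The recursion step of `𝔪𝔦𝔫`: `m` is the minimum of the remaining arguments, and `T`, `U` say
whether `t`, resp. `1 - t`, occurs among them. -/
theorem ite_min_eq_tpngStar {t : ℝ} (ht0 : 0 < t) (ht1 : t < 1) (hthalf : t ≠ 1 / 2)
    {a m : ℝ} (ha : a ∈ tpngSet t) (hm : m ∈ tpngSet t) {T U : Prop}
    (hmT : m = t → T) (hmU : m = 1 - t → U) (hTm : T → m ≤ t) (hUm : U → m ≤ 1 - t) :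
    (if (t = a ∨ T) ∧ (1 - t = a ∨ U) then 0 else min a m) =
      tpngStar t a (if T ∧ U then 0 else m) := by
  have h1 : t ≠ 1 - t := fun h => hthalf (by linarith)
  have h2 : (0 : ℝ) ≠ t := ht0.ne
  have h3 : (0 : ℝ) ≠ 1 - t := by linarith
  have h4 : t ≠ 1 := ht1.ne
  have h5 : 1 - t ≠ 1 := by linarith
  simp only [tpngSet, mem_insert_iff, mem_singleton_iff] at ha hm
  rcases ha with rfl | rfl | rfl | rfl <;> rcases hm with rfl | rfl | rfl | rfl <;>
    by_cases hT : T <;> by_cases hU : U <;>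
    simp_all [tpngStar, eq_comm] <;>
    linarith

theorem tpngSetMin_insert {t : ℝ} (ht0 : 0 < t) (ht1 : t < 1) (hthalf : t ≠ 1 / 2)
    {a : ℝ} (ha : a ∈ tpngSet t) {s : Set ℝ} (hs : s ⊆ tpngSet t) (hfin : s.Finite)
    (hne : s.Nonempty) :
    tpngSetMin t (insert a s) = tpngStar t a (tpngSetMin t s) := by
  classical
  have hm : sInf s ∈ s := hne.csInf_mem hfin
  have hle (b : ℝ) (hb : b ∈ s) : sInf s ≤ b := csInf_le hfin.bddBelow hb
  simp only [tpngSetMin, mem_insert_iff, csInf_insert hfin.bddBelow hne]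
  exact ite_min_eq_tpngStar ht0 ht1 hthalf ha (hs hm) (· ▸ hm) (· ▸ hm) (hle t) (hle (1 - t))

theorem tpngStarProd_eq_tpngSetMin {t : ℝ} (ht0 : 0 < t) (ht1 : t < 1) (hthalf : t ≠ 1 / 2)
    {l : List ℝ} (hl : l ≠ []) (hS : ∀ a ∈ l, a ∈ tpngSet t) :
    tpngStarProd t l = tpngSetMin t {a | a ∈ l} := by
  induction l with
  | nil => exact absurd rfl hl
  | cons a l ih =>
    rcases l with _ | ⟨b, l⟩
    · simp [tpngStarProd, tpngSetMin_singleton hthalf]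
    · have hS' : ∀ c ∈ b :: l, c ∈ tpngSet t := fun c hc => hS c (List.mem_cons_of_mem a hc)
      have hset : {c | c ∈ a :: b :: l} = insert a {c | c ∈ b :: l} := by ext; simp
      rw [tpngStarProd, ih (List.cons_ne_nil b l) hS', hset,
        tpngSetMin_insert ht0 ht1 hthalf (s := {c | c ∈ b :: l}) (hS a List.mem_cons_self) hS'
          (List.finite_toSet _) ⟨b, List.mem_cons_self⟩]

/-- On the set `S = {0, t, 1-t, 1}` (with `t ∈ (0,1)`, `t ≠ 1/2`), the Boolean-type
product `⋆` is commutative and associative, and the modified minimum `𝔪𝔦𝔫` of any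
`x₁, …, x_n ∈ S` (`n ≥ 1`) equals the iterated product `x₁ ⋆ ⋯ ⋆ x_n`. -/
theorem tpng_min_eq_boolean_product
    (t : ℝ) (ht0 : 0 < t) (ht1 : t < 1) (hthalf : t ≠ 1 / 2) :
    (∀ a ∈ ({0, t, 1 - t, 1} : Set ℝ), ∀ b ∈ ({0, t, 1 - t, 1} : Set ℝ),
      tpngStar t a b = tpngStar t b a) ∧
    (∀ a ∈ ({0, t, 1 - t, 1} : Set ℝ), ∀ b ∈ ({0, t, 1 - t, 1} : Set ℝ),
      ∀ c ∈ ({0, t, 1 - t, 1} : Set ℝ),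
      tpngStar t a (tpngStar t b c) = tpngStar t (tpngStar t a b) c) ∧
    (∀ (n : ℕ) (x : Fin (n + 1) → ℝ), (∀ i, x i ∈ ({0, t, 1 - t, 1} : Set ℝ)) →
      tpngMin t x = tpngStarProd t (List.ofFn x)) := by
  have hprod (l : List ℝ) := tpngStarProd_eq_tpngSetMin ht0 ht1 hthalf (l := l)
  refine ⟨fun a _ b _ => tpngStar_comm t a b, fun a ha b hb c hc => ?_, fun n x hx => ?_⟩
  · have hS : ∀ x ∈ [a, b, c], x ∈ tpngSet t :=
      List.forall_mem_cons.2 ⟨ha, List.forall_mem_cons.2 ⟨hb, List.forall_mem_singleton.2 hc⟩⟩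
    have hperm : [a, b, c].Perm [c, a, b] := List.perm_middle (l₁ := [a, b]) (l₂ := [])
    calc tpngStar t a (tpngStar t b c)
        = tpngSetMin t {x | x ∈ [a, b, c]} := hprod _ (List.cons_ne_nil _ _) hS
      _ = tpngSetMin t {x | x ∈ [c, a, b]} := by simp only [hperm.mem_iff]
      _ = tpngStar t c (tpngStar t a b) :=
        (hprod _ (List.cons_ne_nil _ _) fun x hx => hS x (hperm.mem_iff.2 hx)).symm
      _ = tpngStar t (tpngStar t a b) c := tpngStar_comm t _ _
  · have hS (y : ℝ) (hy : y ∈ List.ofFn x) : y ∈ tpngSet t := by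
      obtain ⟨i, rfl⟩ := (List.mem_ofFn' x y).1 hy
      exact hx i
    rw [tpngMin_eq_tpngSetMin_range, hprod _ (by simp) hS]
    simp only [List.mem_ofFn', ofPred_mem_eq]
end
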